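/- arXiv:1805.02254 — 5 statements merged into one kernel-verified Lean document; each statement's English description precedes it below -/
import Mathlib

section
/- Let φ : ℝ → ℝ be a continuous mapping, let S ⊂ ℝ be a finite set, and let N ≥ 4 be an integer. Suppose that for every x, y ∈ ℝ there exist v ∈ V and k ∈ [1,N]⁴ ∩ ℤ₀⁴ with Σ_{j=1}^{4} v_j·φ(x+k_j·y) ∈ S. Then for any nonempty intervals I, J ⊆ ℝ there exist nonempty intervals I' ⊆ I and J' ⊆ J, vectors k ∈ [1,N]⁴ ∩ ℤ₀⁴ and v ∈ V, and a number s ∈ S such that I' × J' ⊆ Q(k, v, s), i.e. Σ_{j=1}^{4} v_j·φ(x+k_j·y) = s for all (x,y) ∈ I' × J'. -/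
/-!
The rectangle `Ioo a b ×ˢ Ioo c d` is covered by the level sets `Q(k, v, s)`, of which there are
only countably many, and each is closed since `φ` is continuous. By the Baire category theorem
one of them has interior points in the rectangle, and a small open rectangle around such a point
does the job.
-/

open MeasureTheory Set

/-- The family `V` of seven vectors in `ℝ⁴`. -/
def Vfam : Set (Fin 4 → ℝ) :=
  { ![1, 1, -1, -1], ![1, 1, -2, 0], ![1, -1, 0, 0], ![1, 1, 0, 0],
    ![2, 0, 0, 0], ![1, 1, -1, 0], ![1, 0, 0, 0] }

theorem IsOpen.exists_inter_interior_nonempty_of_subset_biUnion {X α : Type*}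
    [TopologicalSpace X] [BaireSpace X] {U : Set X} (hU : IsOpen U) (hne : U.Nonempty)
    {T : Set α} (hT : T.Countable) {F : α → Set X} (hF : ∀ i ∈ T, IsClosed (F i))
    (hcov : U ⊆ ⋃ i ∈ T, F i) : ∃ i ∈ T, (U ∩ interior (F i)).Nonempty := by
  have : BaireSpace U := hU.baireSpace
  have : Nonempty U := hne.to_subtype
  have hdense := dense_biUnion_interior_of_closed (f := fun i ↦ ((↑) : U → X) ⁻¹' F i)
    (fun i hi ↦ (hF i hi).preimage continuous_subtype_val) hT
    (eq_univ_of_forall fun q ↦ by simpa using hcov q.2)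
  obtain ⟨q, hq⟩ := hdense.nonempty
  obtain ⟨i, hi, hqi⟩ := mem_iUnion₂.1 hq
  have hopen : IsOpen (((↑) : U → X) '' interior ((↑) ⁻¹' F i)) :=
    hU.isOpenMap_subtype_val _ isOpen_interior
  have hsub : ((↑) : U → X) '' interior ((↑) ⁻¹' F i) ⊆ F i := by
    rintro _ ⟨r, hr, rfl⟩
    exact (interior_subset hr : r ∈ ((↑) : U → X) ⁻¹' F i)
  exact ⟨i, hi, q, q.2, interior_maximal hsub hopen ⟨q, hqi, rfl⟩⟩

theorem Real.exists_Ioo_prod_Ioo_subset_of_isOpen {W : Set (ℝ × ℝ)} (hW : IsOpen W)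
    (hne : W.Nonempty) :
    ∃ a b c d : ℝ, a < b ∧ c < d ∧ Ioo a b ×ˢ Ioo c d ⊆ W := by
  obtain ⟨p, hp⟩ := hne
  obtain ⟨ε, hε, hball⟩ := Metric.isOpen_iff.1 hW p hp
  refine ⟨p.1 - ε, p.1 + ε, p.2 - ε, p.2 + ε, by linarith, by linarith, ?_⟩
  rwa [← Real.ball_eq_Ioo, ← Real.ball_eq_Ioo, ball_prod_same]

/-- The set `Q(k, v, s)` of the paper. -/
def sumLevelSet (φ : ℝ → ℝ) {n : ℕ} (k : Fin n → ℤ) (v : Fin n → ℝ) (s : ℝ) : Set (ℝ × ℝ) :=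
  {p | ∑ j, v j * φ (p.1 + k j * p.2) = s}

theorem isClosed_sumLevelSet {φ : ℝ → ℝ} (hφ : Continuous φ) {n : ℕ} (k : Fin n → ℤ)
    (v : Fin n → ℝ) (s : ℝ) : IsClosed (sumLevelSet φ k v s) :=
  isClosed_eq (by fun_prop) continuous_const

theorem Vfam_finite : Vfam.Finite := by
  simp [Vfam]

theorem lemma_two_general (φ : ℝ → ℝ) (hφ : Continuous φ)
    (S : Set ℝ) (hS : S.Finite) (N : ℤ)
    (hyp : ∀ x y : ℝ, ∃ v ∈ Vfam, ∃ k : Fin 4 → ℤ,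
      Function.Injective k ∧ (∀ j, 1 ≤ k j ∧ k j ≤ N) ∧
      (∑ j : Fin 4, v j * φ (x + (k j : ℝ) * y)) ∈ S) :
    ∀ a b c d : ℝ, a < b → c < d →
      ∃ a' b' c' d' : ℝ, a' < b' ∧ c' < d' ∧
        Set.Ioo a' b' ⊆ Set.Ioo a b ∧ Set.Ioo c' d' ⊆ Set.Ioo c d ∧
        ∃ v ∈ Vfam, ∃ k : Fin 4 → ℤ,
          Function.Injective k ∧ (∀ j, 1 ≤ k j ∧ k j ≤ N) ∧
          ∃ s ∈ S, ∀ x ∈ Set.Ioo a' b', ∀ y ∈ Set.Ioo c' d',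
            (∑ j : Fin 4, v j * φ (x + (k j : ℝ) * y)) = s := by
  intro a b c d hab hcd
  set K : Set (Fin 4 → ℤ) := {k | Function.Injective k ∧ ∀ j, 1 ≤ k j ∧ k j ≤ N}
  have hcov : Ioo a b ×ˢ Ioo c d ⊆
      ⋃ i ∈ Vfam ×ˢ K ×ˢ S, sumLevelSet φ i.2.1 i.1 i.2.2 := by
    rintro ⟨x, y⟩ -
    obtain ⟨v, hv, k, hk, hkN, hs⟩ := hyp x y
    exact mem_iUnion₂.2 ⟨(v, k, _), ⟨hv, ⟨hk, hkN⟩, hs⟩, rfl⟩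
  obtain ⟨⟨v, k, s⟩, ⟨hv, ⟨hk, hkN⟩, hs⟩, hW⟩ :=
    (isOpen_Ioo.prod isOpen_Ioo).exists_inter_interior_nonempty_of_subset_biUnion
      (nonempty_Ioo.2 hab |>.prod (nonempty_Ioo.2 hcd))
      (Vfam_finite.countable.prod ((to_countable K).prod hS.countable))
      (fun i _ ↦ isClosed_sumLevelSet hφ _ _ _) hcov
  obtain ⟨a', b', c', d', hab', hcd', hsub⟩ :=
    Real.exists_Ioo_prod_Ioo_subset_of_isOpen
      ((isOpen_Ioo.prod isOpen_Ioo).inter isOpen_interior) hW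
  have hsides : Ioo a' b' ⊆ Ioo a b ∧ Ioo c' d' ⊆ Ioo c d := by
    have := prod_subset_prod_iff.1 (hsub.trans inter_subset_left)
    simpa [(nonempty_Ioo.2 hab').ne_empty, (nonempty_Ioo.2 hcd').ne_empty] using this
  exact ⟨a', b', c', d', hab', hcd', hsides.1, hsides.2, v, hv, k, hk, hkN, s, hs,
    fun x hx y hy ↦ (interior_subset (hsub.trans inter_subset_right (mk_mem_prod hx hy)) :
      (x, y) ∈ sumLevelSet φ k v s)⟩

theorem lemma_two (φ : ℝ → ℝ) (hφ : Continuous φ)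
    (S : Set ℝ) (hS : S.Finite) (N : ℤ) (hN : 4 ≤ N)
    (hyp : ∀ x y : ℝ, ∃ v ∈ Vfam, ∃ k : Fin 4 → ℤ,
      Function.Injective k ∧ (∀ j, 1 ≤ k j ∧ k j ≤ N) ∧
      (∑ j : Fin 4, v j * φ (x + (k j : ℝ) * y)) ∈ S) :
    ∀ a b c d : ℝ, a < b → c < d →
      ∃ a' b' c' d' : ℝ, a' < b' ∧ c' < d' ∧
        Set.Ioo a' b' ⊆ Set.Ioo a b ∧ Set.Ioo c' d' ⊆ Set.Ioo c d ∧
        ∃ v ∈ Vfam, ∃ k : Fin 4 → ℤ,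
          Function.Injective k ∧ (∀ j, 1 ≤ k j ∧ k j ≤ N) ∧
          ∃ s ∈ S, ∀ x ∈ Set.Ioo a' b', ∀ y ∈ Set.Ioo c' d',
            (∑ j : Fin 4, v j * φ (x + (k j : ℝ) * y)) = s :=
  lemma_two_general φ hφ S hS N hyp
end

section
/- Let φ : ℝ → ℝ be a continuous mapping, let S ⊂ ℝ be a finite set, and let N ≥ 4 be an integer. Suppose that for every x, y ∈ ℝ there exist v ∈ V and k ∈ [1,N]⁴ ∩ ℤ₀⁴ such that Σ_{j=1}^{4} v_j·φ(x+k_j·y) ∈ S. Then the set of nonlinearity E(φ) is nowhere dense; in particular, every nonempty open interval Δ ⊆ ℝ contains a nonempty open subinterval on which φ coincides with an affine function. -/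
/-
By Baire's theorem (there are only countably many choices of `v`, `k` and the value in `S`),
on every open set some single relation `∑ v j * φ (x + k j * y) = s` holds on a whole ball.
Moving `(x, y)` along `(-k i, 1)` freezes the `i`-th argument, so three such finite differences
kill the terms `i = 1, 2, 3`; as `v 0 ≠ 0`, the third finite differences of `φ` vanish near
`x + k 0 * y`. A continuous function with this property is locally quadratic: its second
differences are bilinear in the steps, and a continuous solution of the midpoint equation on an
interval is affine, by a maximum-principle argument. Running the Baire step again inside an
interval where `φ t = p * t ^ 2 + q * t + r`, the relation becomes a polynomial identity in
`(x, y)`; its `x * y` and `y ^ 2` coefficients give `p * ∑ v j * k j = p * ∑ v j * k j ^ 2 = 0`,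
and for `v ∈ V` and distinct positive `k j` one of the two sums is nonzero, so `p = 0`.
-/

open MeasureTheory Set

/-- The set of nonlinearity of `φ`: points having no open neighborhood
on which `φ` coincides with an affine function. -/
def NonlinSet (φ : ℝ → ℝ) : Set ℝ :=
  {t | ¬ ∃ ε > (0 : ℝ), ∃ p q : ℝ, ∀ u : ℝ, |u - t| < ε → φ u = p * u + q}

open Filter Topology fwdDiff

theorem le_max_of_midpoint_eq {f : ℝ → ℝ} {a b : ℝ} (hab : a ≤ b) (hc : ContinuousOn f (Icc a b))
    (hmid : ∀ s ∈ Icc a b, ∀ t ∈ Icc a b, f ((s + t) / 2) = (f s + f t) / 2) :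
    ∀ t ∈ Icc a b, f t ≤ max (f a) (f b) := by
  obtain ⟨t₀, ⟨hat₀, ht₀b⟩, hmax⟩ := isCompact_Icc.exists_isMaxOn (nonempty_Icc.2 hab) hc
  -- the maximum value is also taken at `t₀ ± δ`, one of which is an endpoint
  obtain ⟨δ, ⟨hδ, hδa, hδb⟩, hδ_end⟩ :
      ∃ δ, (0 ≤ δ ∧ δ ≤ t₀ - a ∧ δ ≤ b - t₀) ∧ (t₀ - δ = a ∨ t₀ + δ = b) :=
    ⟨min (t₀ - a) (b - t₀), ⟨le_min (by linarith) (by linarith), min_le_left _ _,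
      min_le_right _ _⟩, (min_choice (t₀ - a) (b - t₀)).imp (fun h => by rw [h]; ring)
        (fun h => by rw [h]; ring)⟩
  have hl : t₀ - δ ∈ Icc a b := ⟨by linarith, by linarith⟩
  have hr : t₀ + δ ∈ Icc a b := ⟨by linarith, by linarith⟩
  have hJ := hmid _ hl _ hr
  rw [show (t₀ - δ + (t₀ + δ)) / 2 = t₀ by ring] at hJ
  have hl_le : f (t₀ - δ) ≤ f t₀ := hmax hl
  have hr_le : f (t₀ + δ) ≤ f t₀ := hmax hr
  have hend : f t₀ ≤ max (f a) (f b) := by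
    rcases hδ_end with he | he
    · rw [← he]; exact le_max_of_le_left (by linarith)
    · rw [← he]; exact le_max_of_le_right (by linarith)
  exact fun t ht => (hmax ht).trans hend

theorem exists_affine_of_midpoint_eq {g : ℝ → ℝ} {a b : ℝ} (hab : a < b)
    (hc : ContinuousOn g (Icc a b))
    (hmid : ∀ s ∈ Icc a b, ∀ t ∈ Icc a b, g ((s + t) / 2) = (g s + g t) / 2) :
    ∃ p q : ℝ, ∀ t ∈ Icc a b, g t = p * t + q := by
  set p := slope g a b
  set e : ℝ → ℝ := fun t => g t - (p * (t - a) + g a)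
  have he_mid : ∀ s ∈ Icc a b, ∀ t ∈ Icc a b, e ((s + t) / 2) = (e s + e t) / 2 := by
    intro s hs t ht; simp only [e, hmid s hs t ht]; ring
  have he_a : e a = 0 := by simp [e]
  have he_b : e b = 0 := by
    simp only [e, p, slope_def_field]; field_simp [sub_ne_zero.2 hab.ne']; ring
  have he_c : ContinuousOn e (Icc a b) := hc.sub (by fun_prop)
  have hneg_mid : ∀ s ∈ Icc a b, ∀ t ∈ Icc a b, (-e) ((s + t) / 2) = ((-e) s + (-e) t) / 2 := by
    intro s hs t ht; simp only [Pi.neg_apply, he_mid s hs t ht]; ring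
  have hle := le_max_of_midpoint_eq hab.le he_c he_mid
  have hge := le_max_of_midpoint_eq hab.le he_c.neg hneg_mid
  refine ⟨p, g a - p * a, fun t ht => ?_⟩
  have h1 := hle t ht
  have h2 := hge t ht
  simp only [Pi.neg_apply, he_a, he_b, neg_zero, max_self] at h1 h2
  have : e t = 0 := by linarith
  simp only [e] at this
  linarith

theorem exists_affine_of_fwdDiff_fwdDiff_eq_zero {g : ℝ → ℝ} (hg : Continuous g) {c ρ : ℝ}
    (H : ∀ u h, |u - c| < ρ → |h| < ρ → Δ_[h] (Δ_[h] g) u = 0) :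
    ∃ p q : ℝ, ∀ t, |t - c| < ρ / 2 → g t = p * t + q := by
  rcases le_or_gt ρ 0 with hρ | hρ
  · exact ⟨0, 0, fun t ht => absurd ((abs_nonneg _).trans_lt ht) (by linarith)⟩
  have hIcc : ∀ t ∈ Icc (c - ρ / 2) (c + ρ / 2), |t - c| ≤ ρ / 2 := fun t ht =>
    abs_le.2 ⟨by linarith [ht.1], by linarith [ht.2]⟩
  have hmid : ∀ s ∈ Icc (c - ρ / 2) (c + ρ / 2), ∀ t ∈ Icc (c - ρ / 2) (c + ρ / 2),
      g ((s + t) / 2) = (g s + g t) / 2 := by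
    intro s hs t ht
    have hst : |(t - s) / 2| < ρ := by
      rw [abs_div, abs_two]; linarith [abs_sub_le t c s, abs_sub_comm s c, hIcc s hs, hIcc t ht]
    have := H s ((t - s) / 2) (by linarith [hIcc s hs]) hst
    simp only [fwdDiff] at this
    rw [show s + (t - s) / 2 + (t - s) / 2 = t by ring,
      show s + (t - s) / 2 = (s + t) / 2 by ring] at this
    linarith
  obtain ⟨p, q, hpq⟩ := exists_affine_of_midpoint_eq (by linarith) hg.continuousOn hmid
  exact ⟨p, q, fun t ht => hpq t ⟨by linarith [(abs_lt.1 ht).1], by linarith [(abs_lt.1 ht).2]⟩⟩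

theorem exists_quadratic_of_fwdDiff_three_eq_zero {f : ℝ → ℝ} (hf : Continuous f) {c : ℝ}
    (H : ∀ᶠ w : ℝ × ℝ × ℝ × ℝ in 𝓝 (c, 0, 0, 0),
      Δ_[w.2.1] (Δ_[w.2.2.1] (Δ_[w.2.2.2] f)) w.1 = 0) :
    ∃ p q r : ℝ, ∀ᶠ t in 𝓝 c, f t = p * t ^ 2 + q * t + r := by
  obtain ⟨ρ, hρ, hball⟩ := Metric.eventually_nhds_iff.1 H
  have H' : ∀ u h₁ h₂ h₃, |u - c| < ρ → |h₁| < ρ → |h₂| < ρ → |h₃| < ρ →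
      Δ_[h₁] (Δ_[h₂] (Δ_[h₃] f)) u = 0 := fun u h₁ h₂ h₃ hu h1 h2 h3 =>
    hball (y := (u, h₁, h₂, h₃)) (by simp [Prod.dist_eq, Real.dist_eq, *])
  set D : ℝ → ℝ → ℝ := fun h h' => Δ_[h] (Δ_[h'] f) c
  have hD_symm : ∀ h h', D h h' = D h' h := by
    intro h h'; simp only [D, fwdDiff]; ring_nf
  have hD_lin : ∀ h', |h'| < ρ → ∃ l, ∀ h, |h| < ρ / 2 → D h h' = l * h := by
    intro h' hh'
    obtain ⟨l, m, hlm⟩ := exists_affine_of_fwdDiff_fwdDiff_eq_zero (g := fun h => D h h') (c := 0)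
      (ρ := ρ) (by simp only [D, fwdDiff]; fun_prop) fun u a hu ha => by
        have := H' (c + u) a a h' (by simpa using hu) ha ha hh'
        simp only [D, fwdDiff] at this ⊢; ring_nf at this ⊢; linarith
    have hm : m = 0 := by
      have := hlm 0 (by simpa using half_pos hρ)
      simp only [D, fwdDiff, add_zero, sub_self, mul_zero, zero_add] at this
      linarith
    exact ⟨l, fun h hh => by rw [hlm h (by simpa using hh), hm]; ring⟩
  choose! l hl using hD_lin
  obtain ⟨κ, hD⟩ : ∃ κ, ∀ h h', |h| < ρ / 2 → |h'| < ρ / 2 → D h h' = κ * h * h' := by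
    refine ⟨l (ρ / 4) / (ρ / 4), fun h h' hh hh' => ?_⟩
    have h4 : |ρ / 4| < ρ / 2 := by rw [abs_of_pos (by positivity)]; linarith
    have e := hl h' (by linarith) (ρ / 4) h4
    rw [hD_symm, hl (ρ / 4) (by linarith) h' hh'] at e
    rw [hl h' (by linarith) h hh]
    field_simp
    linear_combination -4 * h * e
  obtain ⟨q, r, hqr⟩ := exists_affine_of_fwdDiff_fwdDiff_eq_zero
    (g := fun t => f t - κ / 2 * t ^ 2) (c := c) (ρ := ρ / 2) (by fun_prop)
    fun u h hu hh => by
      have h1 := H' c (u - c) h h (by simpa using hρ) (by linarith) (by linarith) (by linarith)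
      have h2 := hD h h hh hh
      simp only [D, fwdDiff, add_sub_cancel] at h1 h2 ⊢
      ring_nf at h1 h2 ⊢
      linarith
  refine ⟨κ / 2, q, r, Metric.eventually_nhds_iff.2 ⟨ρ / 4, by positivity, fun t ht => ?_⟩⟩
  have := hqr t (by rw [← Real.dist_eq]; linarith)
  linarith

theorem eventually_fwdDiff_three_eq_zero {φ : ℝ → ℝ} {v k : Fin 4 → ℝ} (hv : v 0 ≠ 0)
    (hk : ∀ i, i ≠ 0 → k i ≠ k 0) {z : ℝ × ℝ} {s : ℝ}
    (h : ∀ᶠ w in 𝓝 z, ∑ j, v j * φ (w.1 + k j * w.2) = s) :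
    ∀ᶠ w : ℝ × ℝ × ℝ × ℝ in 𝓝 (z.1 + k 0 * z.2, 0, 0, 0),
      Δ_[w.2.1] (Δ_[w.2.2.1] (Δ_[w.2.2.2] φ)) w.1 = 0 := by
  set base : ℝ × ℝ × ℝ × ℝ := (z.1 + k 0 * z.2, 0, 0, 0)
  -- moving `(x, y)` along `(-k i, 1)` fixes the `i`-th argument and moves the `0`-th one
  have hshift : ∀ e₁ e₂ e₃ : ℝ, ∀ᶠ w in 𝓝 base, ∑ j, v j * φ
      (w.1 - k 0 * z.2 - e₁ * k 1 * w.2.1 - e₂ * k 2 * w.2.2.1 - e₃ * k 3 * w.2.2.2 +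
        k j * (z.2 + e₁ * w.2.1 + e₂ * w.2.2.1 + e₃ * w.2.2.2)) = s := by
    intro e₁ e₂ e₃
    have hT : Continuous fun w : ℝ × ℝ × ℝ × ℝ =>
        (w.1 - k 0 * z.2 - e₁ * k 1 * w.2.1 - e₂ * k 2 * w.2.2.1 - e₃ * k 3 * w.2.2.2,
          z.2 + e₁ * w.2.1 + e₂ * w.2.2.1 + e₃ * w.2.2.2) := by fun_prop
    exact (hT.tendsto' base z (by simp [base])).eventually h
  have hscaled : ∀ᶠ w in 𝓝 base, Δ_[(k 0 - k 1) * w.2.1] (Δ_[(k 0 - k 2) * w.2.2.1]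
      (Δ_[(k 0 - k 3) * w.2.2.2] φ)) w.1 = 0 := by
    filter_upwards [hshift 0 0 0, hshift 1 0 0, hshift 0 1 0, hshift 0 0 1, hshift 1 1 0,
      hshift 1 0 1, hshift 0 1 1, hshift 1 1 1] with w h000 h100 h010 h001 h110 h101 h011 h111
    have hsum : v 0 * Δ_[(k 0 - k 1) * w.2.1] (Δ_[(k 0 - k 2) * w.2.2.1]
        (Δ_[(k 0 - k 3) * w.2.2.2] φ)) w.1 = 0 := by
      simp only [Fin.sum_univ_four, fwdDiff] at *
      linear_combination (norm := ring_nf) h111 - h110 - h101 - h011 + h100 + h010 + h001 - h000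
    exact (mul_eq_zero.1 hsum).resolve_left hv
  have hne : ∀ i, i ≠ 0 → k 0 - k i ≠ 0 := fun i hi => sub_ne_zero.2 (hk i hi).symm
  have hT : Continuous fun w : ℝ × ℝ × ℝ × ℝ =>
      (w.1, w.2.1 / (k 0 - k 1), w.2.2.1 / (k 0 - k 2), w.2.2.2 / (k 0 - k 3)) := by fun_prop
  filter_upwards [(hT.tendsto' base base (by simp [base])).eventually hscaled] with w hw
  simpa only [mul_div_cancel₀ _ (hne 1 (by decide)), mul_div_cancel₀ _ (hne 2 (by decide)),
    mul_div_cancel₀ _ (hne 3 (by decide))] using hw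

theorem eq_zero_of_eventually_sum_quadratic_eq {ι : Type*} [Fintype ι] {v k : ι → ℝ}
    (hvk : ∑ i, v i * k i ≠ 0 ∨ ∑ i, v i * k i ^ 2 ≠ 0) {p q r s : ℝ} {z : ℝ × ℝ}
    (h : ∀ᶠ w in 𝓝 z, ∑ i, v i * (p * (w.1 + k i * w.2) ^ 2 + q * (w.1 + k i * w.2) + r) = s) :
    p = 0 := by
  set A := ∑ i, v i
  set B := ∑ i, v i * k i
  set C := ∑ i, v i * k i ^ 2
  have hpoly : ∀ x y, ∑ i, v i * (p * (x + k i * y) ^ 2 + q * (x + k i * y) + r) =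
      p * A * x ^ 2 + 2 * p * B * x * y + p * C * y ^ 2 + q * A * x + q * B * y + r * A := by
    intro x y
    simp only [A, B, C, Finset.mul_sum, Finset.sum_mul, ← Finset.sum_add_distrib]
    exact Finset.sum_congr rfl fun i _ => by ring
  obtain ⟨ε, hε, hball⟩ := Metric.eventually_nhds_iff.1 h
  have hpt : ∀ a b, |a| ≤ ε / 2 → |b| ≤ ε / 2 → p * A * (z.1 + a) ^ 2 +
      2 * p * B * (z.1 + a) * (z.2 + b) + p * C * (z.2 + b) ^ 2 + q * A * (z.1 + a) +
      q * B * (z.2 + b) + r * A = s := fun a b ha hb => by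
    rw [← hpoly]
    refine hball (y := (z.1 + a, z.2 + b)) ?_
    simp only [Prod.dist_eq, Real.dist_eq, add_sub_cancel_left]
    exact max_lt (by linarith) (by linarith)
  have he : |ε / 2| ≤ ε / 2 := (abs_of_pos (half_pos hε)).le
  have h0 : |(0 : ℝ)| ≤ ε / 2 := by simp; positivity
  have hB : p * B * (ε / 2) ^ 2 = 0 := by
    linear_combination (hpt _ _ he he - hpt _ _ he h0 - hpt _ _ h0 he + hpt _ _ h0 h0) / 2
  have he' : |-(ε / 2)| ≤ ε / 2 := by rwa [abs_neg]
  have hC : p * C * (ε / 2) ^ 2 = 0 := by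
    linear_combination (hpt _ _ h0 he - 2 * hpt _ _ h0 h0 + hpt _ _ h0 he') / 2
  have hε2 : (ε / 2) ^ 2 ≠ 0 := by positivity
  rcases hvk with hB' | hC'
  · simpa [hB', hε2] using hB
  · simpa [hC', hε2] using hC

theorem ne_zero_of_mem_Vfam {v : Fin 4 → ℝ} (hv : v ∈ Vfam) : v 0 ≠ 0 := by
  simp only [Vfam, mem_insert_iff, mem_singleton_iff] at hv
  rcases hv with rfl | rfl | rfl | rfl | rfl | rfl | rfl <;> norm_num

theorem sum_mul_ne_zero_or_sum_mul_sq_ne_zero_of_mem_Vfam {v : Fin 4 → ℝ} (hv : v ∈ Vfam)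
    {k : Fin 4 → ℝ} (hk : Function.Injective k) (hpos : ∀ j, 0 < k j) :
    ∑ j, v j * k j ≠ 0 ∨ ∑ j, v j * k j ^ 2 ≠ 0 := by
  have hne : ∀ i j, i ≠ j → k i - k j ≠ 0 := fun i j hij => sub_ne_zero.2 (hk.ne hij)
  rw [or_iff_not_and_not, not_not, not_not]
  rintro ⟨h1, h2⟩
  simp only [Vfam, mem_insert_iff, mem_singleton_iff] at hv
  rcases hv with rfl | rfl | rfl | rfl | rfl | rfl | rfl <;>
    simp only [Fin.sum_univ_four, Matrix.cons_val_zero, Matrix.cons_val_one, Matrix.cons_val_two,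
      Matrix.cons_val_three, Matrix.head_cons, Matrix.tail_cons] at h1 h2
  · exact mul_ne_zero (hne 0 2 (by decide)) (hne 0 3 (by decide))
      (by linear_combination (h2 + (k 0 - k 1 - k 2 - k 3) * h1) / 2)
  · exact pow_ne_zero 2 (hne 0 1 (by decide))
      (by linear_combination 2 * h2 - (k 0 + k 1 + 2 * k 2) * h1)
  · exact hne 0 1 (by decide) (by linear_combination h1)
  · linarith [hpos 0, hpos 1]
  · linarith [hpos 0]
  · exact (mul_pos (hpos 0) (hpos 1)).ne' (by linear_combination (-h2 + (k 0 + k 1 + k 2) * h1) / 2)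
  · linarith [hpos 0]

theorem isNowhereDense_nonlinSet {φ : ℝ → ℝ} (h : ∀ a b : ℝ, a < b → ∃ c d : ℝ, c < d ∧
    Ioo c d ⊆ Ioo a b ∧ ∃ p q : ℝ, ∀ t ∈ Ioo c d, φ t = p * t + q) :
    IsNowhereDense (NonlinSet φ) := by
  have hcompl : (NonlinSet φ)ᶜ = {t | ∃ p q : ℝ, ∀ᶠ u in 𝓝 t, φ u = p * u + q} := by
    ext t
    simp only [NonlinSet, mem_compl_iff, mem_ofPred_eq, not_not, Metric.eventually_nhds_iff,
      Real.dist_eq]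
    exact ⟨fun ⟨ε, hε, p, q, h⟩ => ⟨p, q, ε, hε, h⟩, fun ⟨p, q, ε, hε, h⟩ => ⟨ε, hε, p, q, h⟩⟩
  refine (isClosed_isNowhereDense_iff_compl.2 ⟨?_, ?_⟩).2 <;> rw [hcompl]
  · exact isOpen_iff_mem_nhds.2 fun t ⟨p, q, hpq⟩ =>
      hpq.eventually_nhds.mono fun u hu => ⟨p, q, hu⟩
  · refine dense_of_exists_between fun a b hab => ?_
    obtain ⟨c, d, hcd, hsub, p, q, hpq⟩ := h a b hab
    have hm : (c + d) / 2 ∈ Ioo c d := ⟨by linarith, by linarith⟩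
    exact ⟨(c + d) / 2, ⟨p, q, eventually_of_mem (Ioo_mem_nhds hm.1 hm.2) hpq⟩, hsub hm⟩

def VSumCondition (φ : ℝ → ℝ) (S : Set ℝ) (N : ℤ) : Prop :=
  ∀ x y : ℝ, ∃ v ∈ Vfam, ∃ k : Fin 4 → ℤ, Function.Injective k ∧ (∀ j, 1 ≤ k j ∧ k j ≤ N) ∧
    (∑ j : Fin 4, v j * φ (x + (k j : ℝ) * y)) ∈ S

theorem VSumCondition.exists_eventually_sum_eq {φ : ℝ → ℝ} {S : Set ℝ} {N : ℤ}
    (hyp : VSumCondition φ S N) (hφ : Continuous φ) (hS : S.Countable) {a b : ℝ} (hab : a < b) :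
    ∃ v ∈ Vfam, ∃ k : Fin 4 → ℤ, Function.Injective k ∧ (∀ j, 1 ≤ k j) ∧ ∃ s : ℝ, ∃ z : ℝ × ℝ,
      ∀ᶠ w in 𝓝 z, (∀ j, w.1 + (k j : ℝ) * w.2 ∈ Ioo a b) ∧
        ∑ j, v j * φ (w.1 + k j * w.2) = s := by
  set U : Set (ℝ × ℝ) := {w | ∀ m ∈ Finset.Icc 1 N, w.1 + (m : ℝ) * w.2 ∈ Ioo a b}
  have hU : IsOpen U := by
    simp only [U, Set.ofPred_forall]
    exact isOpen_biInter_finset fun m _ => isOpen_Ioo.preimage (by fun_prop)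
  have hmid : ((a + b) / 2, (0 : ℝ)) ∈ U := fun m _ => by
    simp only [mul_zero, add_zero, mem_Ioo]; constructor <;> linarith
  have : Countable S := hS.to_subtype
  have : Finite Vfam := by unfold Vfam; infer_instance
  let F : Vfam × {k : Fin 4 → ℤ // Function.Injective k ∧ ∀ j, 1 ≤ k j ∧ k j ≤ N} × S →
      Set (ℝ × ℝ) := fun i => {w | ∑ j, i.1.1 j * φ (w.1 + i.2.1.1 j * w.2) = i.2.2}
  have hF : ∀ i, IsClosed (F i) := fun i => isClosed_eq (by fun_prop) continuous_const
  have hcover : ⋃ i, F i = univ := by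
    refine eq_univ_of_forall fun w => ?_
    obtain ⟨v, hv, k, hk, hkN, hs⟩ := hyp w.1 w.2
    exact mem_iUnion.2 ⟨(⟨v, hv⟩, ⟨k, hk, hkN⟩, ⟨_, hs⟩), rfl⟩
  obtain ⟨z, hz, hzU⟩ := (dense_iUnion_interior_of_closed hF hcover).exists_mem_open hU ⟨_, hmid⟩
  obtain ⟨⟨⟨v, hv⟩, ⟨k, hk, hkN⟩, ⟨s, _⟩⟩, hzF⟩ := mem_iUnion.1 hz
  refine ⟨v, hv, k, hk, fun j => (hkN j).1, s, z, ?_⟩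
  filter_upwards [hU.mem_nhds hzU, mem_interior_iff_mem_nhds.1 hzF] with w hwU hwF
  exact ⟨fun j => hwU (k j) (Finset.mem_Icc.2 (hkN j)), hwF⟩

theorem VSumCondition.exists_quadratic_on_subinterval {φ : ℝ → ℝ} {S : Set ℝ} {N : ℤ}
    (hyp : VSumCondition φ S N) (hφ : Continuous φ) (hS : S.Countable) {a b : ℝ} (hab : a < b) :
    ∃ c d : ℝ, c < d ∧ Ioo c d ⊆ Ioo a b ∧
      ∃ p q r : ℝ, ∀ t ∈ Ioo c d, φ t = p * t ^ 2 + q * t + r := by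
  obtain ⟨v, hv, k, hk, -, s, z, hz⟩ := hyp.exists_eventually_sum_eq hφ hS hab
  obtain ⟨p, q, r, hquad⟩ := exists_quadratic_of_fwdDiff_three_eq_zero hφ
    (eventually_fwdDiff_three_eq_zero (k := fun j => (k j : ℝ)) (ne_zero_of_mem_Vfam hv)
      (fun i hi => Int.cast_injective.ne (hk.ne hi)) (hz.mono fun _ hw => hw.2))
  obtain ⟨c, d, hmem, hsub⟩ := mem_nhds_iff_exists_Ioo_subset.1
    (hquad.and (isOpen_Ioo.mem_nhds (hz.self_of_nhds.1 0)))
  exact ⟨c, d, hmem.1.trans hmem.2, fun t ht => (hsub ht).2, p, q, r, fun t ht => (hsub ht).1⟩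

theorem VSumCondition.eq_zero_of_quadratic_on_Ioo {φ : ℝ → ℝ} {S : Set ℝ} {N : ℤ}
    (hyp : VSumCondition φ S N) (hφ : Continuous φ) (hS : S.Countable) {c d p q r : ℝ}
    (hcd : c < d) (hquad : ∀ t ∈ Ioo c d, φ t = p * t ^ 2 + q * t + r) : p = 0 := by
  obtain ⟨v, hv, k, hk, hk1, s, z, hz⟩ := hyp.exists_eventually_sum_eq hφ hS hcd
  have hsum : ∀ᶠ w in 𝓝 z, ∑ j, v j *
      (p * (w.1 + k j * w.2) ^ 2 + q * (w.1 + k j * w.2) + r) = s := by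
    filter_upwards [hz] with w ⟨hw, hsum⟩
    rw [← hsum]
    exact Finset.sum_congr rfl fun j _ => by rw [hquad _ (hw j)]
  exact eq_zero_of_eventually_sum_quadratic_eq
    (sum_mul_ne_zero_or_sum_mul_sq_ne_zero_of_mem_Vfam hv (Int.cast_injective.comp hk)
      fun j => Int.cast_pos.2 (hk1 j)) hsum

theorem VSumCondition.exists_affine_on_subinterval {φ : ℝ → ℝ} {S : Set ℝ} {N : ℤ}
    (hyp : VSumCondition φ S N) (hφ : Continuous φ) (hS : S.Countable) {a b : ℝ} (hab : a < b) :
    ∃ c d : ℝ, c < d ∧ Ioo c d ⊆ Ioo a b ∧ ∃ p q : ℝ, ∀ t ∈ Ioo c d, φ t = p * t + q := by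
  obtain ⟨c, d, hcd, hsub, p, q, r, hquad⟩ := hyp.exists_quadratic_on_subinterval hφ hS hab
  have hp : p = 0 := hyp.eq_zero_of_quadratic_on_Ioo hφ hS hcd hquad
  exact ⟨c, d, hcd, hsub, q, r, fun t ht => by rw [hquad t ht, hp]; ring⟩

theorem nonlin_nowhere_dense_general (φ : ℝ → ℝ) (hφ : Continuous φ)
    (S : Set ℝ) (hS : S.Finite) (N : ℤ)
    (hyp : ∀ x y : ℝ, ∃ v ∈ Vfam, ∃ k : Fin 4 → ℤ,
      Function.Injective k ∧ (∀ j, 1 ≤ k j ∧ k j ≤ N) ∧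
      (∑ j : Fin 4, v j * φ (x + (k j : ℝ) * y)) ∈ S) :
    IsNowhereDense (NonlinSet φ) ∧
    ∀ a b : ℝ, a < b → ∃ c d : ℝ, c < d ∧ Set.Ioo c d ⊆ Set.Ioo a b ∧
      ∃ p q : ℝ, ∀ t ∈ Set.Ioo c d, φ t = p * t + q := by
  have haff : ∀ a b : ℝ, a < b → ∃ c d : ℝ, c < d ∧ Set.Ioo c d ⊆ Set.Ioo a b ∧
      ∃ p q : ℝ, ∀ t ∈ Set.Ioo c d, φ t = p * t + q := fun _ _ hab =>
    VSumCondition.exists_affine_on_subinterval hyp hφ hS.countable hab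
  exact ⟨isNowhereDense_nonlinSet haff, haff⟩

theorem nonlin_nowhere_dense (φ : ℝ → ℝ) (hφ : Continuous φ)
    (S : Set ℝ) (hS : S.Finite) (N : ℤ) (hN : 4 ≤ N)
    (hyp : ∀ x y : ℝ, ∃ v ∈ Vfam, ∃ k : Fin 4 → ℤ,
      Function.Injective k ∧ (∀ j, 1 ≤ k j ∧ k j ≤ N) ∧
      (∑ j : Fin 4, v j * φ (x + (k j : ℝ) * y)) ∈ S) :
    IsNowhereDense (NonlinSet φ) ∧
    ∀ a b : ℝ, a < b → ∃ c d : ℝ, c < d ∧ Set.Ioo c d ⊆ Set.Ioo a b ∧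
      ∃ p q : ℝ, ∀ t ∈ Set.Ioo c d, φ t = p * t + q :=
  nonlin_nowhere_dense_general φ hφ S hS N hyp
end

section
/- Let φ : ℝ → ℝ be continuous, let k1, k2, k3, k4 be pairwise distinct integers, let v = (v1, v2, v3, v4) ∈ ℝ⁴ with v1 ≠ 0, and let s ∈ ℝ. Suppose there are nonempty open intervals I, J ⊆ ℝ such that Σ_{j=1}^{4} v_j·φ(x + k_j·y) = s for all (x, y) ∈ I × J. Then there exists a nonempty open interval on which φ coincides with a polynomial of degree at most 2. -/
/-
Apply to the identity `∑ⱼ vⱼ φ(x + kⱼ y) = s`, viewed as a function of `(x, y)`, the three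
difference operators in the directions `uⱼ` (`j = 1, 2, 3`) along which `x + kⱼ y` is constant and
`x + k₀ y` grows by `η`. Each kills the `j`-th term, so `v₀ Δ_η³ φ = 0` near some point, for all
small `η`. A continuous function with vanishing third differences can be written, after integrating
over the step, as a fixed linear combination of translates of its primitive; iterating this three
times gives a `C³` function that agrees with `φ` on an interval. Differentiating `Δ_η³ g(t)` three
times in `η` at `η = 0` gives `6 g'''(t) = 0`, so `g`, and with it `φ`, is quadratic there.
-/

open Set Filter Topology fwdDiff

section fwdDiff

variable {M N G : Type*} [AddCommMonoid M] [AddCommMonoid N] [AddCommGroup G]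

lemma fwdDiff_zero_left (f : M → G) : Δ_[0] f = 0 := by
  ext; simp [fwdDiff]

lemma fwdDiff_sub_const (h : M) (f : M → G) (c : G) : Δ_[h] (fun x => f x - c) = Δ_[h] f := by
  ext; simp [fwdDiff]

lemma fwdDiff_comp_addMonoidHom (L : M →+ N) (f : N → G) (w : M) :
    Δ_[w] (f ∘ L) = Δ_[L w] f ∘ L := by
  ext; simp [fwdDiff]

lemma fwdDiff_fwdDiff_fwdDiff_sum_comp {R : Type*} [Monoid R] [DistribMulAction R G]
    (φ : N → G) (ℓ : Fin 4 → M →+ N) (v : Fin 4 → R) {w₁ w₂ w₃ : M}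
    (h₁ : ℓ 1 w₁ = 0) (h₂ : ℓ 2 w₂ = 0) (h₃ : ℓ 3 w₃ = 0) :
    Δ_[w₁] (Δ_[w₂] (Δ_[w₃] (∑ j, v j • (φ ∘ ℓ j)))) =
      v 0 • (Δ_[ℓ 0 w₁] (Δ_[ℓ 0 w₂] (Δ_[ℓ 0 w₃] φ)) ∘ ℓ 0) := by
  simp [fwdDiff_comp_addMonoidHom, Fin.sum_univ_four, h₁, h₂, h₃, fwdDiff_zero_left]

lemma fwdDiff_iter_congr {f g : M → G} {h y : M} {n : ℕ}
    (hfg : ∀ k ≤ n, f (y + k • h) = g (y + k • h)) : (Δ_[h])^[n] f y = (Δ_[h])^[n] g y := by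
  simp only [fwdDiff_iter_eq_sum_shift]
  exact Finset.sum_congr rfl fun k hk => by
    rw [hfg k (Nat.lt_succ_iff.1 (Finset.mem_range.1 hk))]

lemma eventually_fwdDiff_eq_zero {X E : Type*} [TopologicalSpace X] [TopologicalSpace E]
    [AddCommMonoid E] [ContinuousAdd E] {g : X → E → G} {x₀ : X} {q₀ : E}
    (hg : ∀ᶠ p in 𝓝 (x₀, q₀), g p.1 p.2 = 0) {w : X → E} (hw : Tendsto w (𝓝 x₀) (𝓝 0)) :
    ∀ᶠ p in 𝓝 (x₀, q₀), Δ_[w p.1] (g p.1) p.2 = 0 := by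
  have hshift : Tendsto (fun p : X × E => (p.1, p.2 + w p.1)) (𝓝 (x₀, q₀)) (𝓝 (x₀, q₀)) := by
    refine (continuous_fst.tendsto _).prodMk_nhds ?_
    simpa using (continuous_snd.tendsto _).add (hw.comp (continuous_fst.tendsto _))
  filter_upwards [hg, hshift.eventually hg] with p h₀ h₁
  simp [fwdDiff, h₀, h₁]

end fwdDiff

lemma eventually_fwdDiff_three_eq_zero_of_sum_eq (φ : ℝ → ℝ) {K : Fin 4 → ℝ}
    (hK : Function.Injective K) (v : Fin 4 → ℝ) (s : ℝ) {U : Set (ℝ × ℝ)} (hU : IsOpen U)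
    (heq : ∀ q ∈ U, ∑ j, v j * φ (q.1 + K j * q.2) = s) {q₀ : ℝ × ℝ} (hq₀ : q₀ ∈ U) :
    ∀ᶠ p : ℝ × ℝ in 𝓝 (q₀.1 + K 0 * q₀.2, 0), v 0 * (Δ_[p.2])^[3] φ p.1 = 0 := by
  let ℓ : Fin 4 → ℝ × ℝ →+ ℝ := fun j =>
    AddMonoidHom.mk' (fun q => q.1 + K j * q.2) fun a b => by
      simp only [Prod.fst_add, Prod.snd_add]; ring
  let u : Fin 4 → ℝ × ℝ := fun j => (-K j / (K 0 - K j), 1 / (K 0 - K j))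
  have hℓu : ∀ j, ∀ η : ℝ, ℓ j (η • u j) = 0 := fun j η => by
    simp only [Prod.smul_mk, smul_eq_mul, AddMonoidHom.mk'_apply, ℓ, u]
    ring
  have hℓ₀u : ∀ j ≠ 0, ∀ η : ℝ, ℓ 0 (η • u j) = η := fun j hj η => by
    have : K 0 - K j ≠ 0 := sub_ne_zero.2 (hK.ne hj.symm)
    simp only [Prod.smul_mk, smul_eq_mul, AddMonoidHom.mk'_apply, ℓ, u]
    field_simp
    ring
  set F : ℝ × ℝ → ℝ := ∑ j, v j • (φ ∘ ℓ j) with hF_def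
  have hF : ∀ᶠ p : ℝ × (ℝ × ℝ) in 𝓝 (0, q₀), F p.2 - s = 0 := by
    refine ((continuous_snd.tendsto (0, q₀)).eventually (hU.mem_nhds hq₀)).mono fun p hp => ?_
    simp [F, ℓ, ← heq p.2 hp]
  have hw : ∀ j, Tendsto (fun η : ℝ => η • u j) (𝓝 0) (𝓝 0) := fun j =>
    (by fun_prop : Continuous fun η : ℝ => η • u j).tendsto' 0 0 (zero_smul ℝ _)
  have hΔ₃ := eventually_fwdDiff_eq_zero (g := fun _ q => F q - s) hF (hw 3)
  have hΔ₂ := eventually_fwdDiff_eq_zero (g := fun η => Δ_[η • u 3] fun q => F q - s) hΔ₃ (hw 2)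
  have hΔ₁ := eventually_fwdDiff_eq_zero
    (g := fun η => Δ_[η • u 2] (Δ_[η • u 3] fun q => F q - s)) hΔ₂ (hw 1)
  have hmap : Tendsto (fun p : ℝ × ℝ => (p.2, (p.1 - K 0 * q₀.2, q₀.2)))
      (𝓝 (q₀.1 + K 0 * q₀.2, 0)) (𝓝 (0, q₀)) :=
    (by fun_prop : Continuous fun p : ℝ × ℝ => (p.2, (p.1 - K 0 * q₀.2, q₀.2))).tendsto' _ _
      (by simp)
  filter_upwards [hmap.eventually hΔ₁] with p hp
  rw [fwdDiff_sub_const, hF_def,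
    fwdDiff_fwdDiff_fwdDiff_sum_comp φ ℓ v (hℓu 1 _) (hℓu 2 _) (hℓu 3 _),
    hℓ₀u 1 (by decide), hℓ₀u 2 (by decide), hℓ₀u 3 (by decide)] at hp
  simpa [ℓ] using hp

lemma sum_choose_mul_pow_eq_factorial (n : ℕ) :
    ∑ k ∈ Finset.range (n + 1), ((-1 : ℤ) ^ (n - k) * n.choose k : ℝ) * (k : ℝ) ^ n =
      n.factorial := by
  have := congr_fun (fwdDiff_iter_eq_factorial (R := ℝ) (n := n)) 0
  rw [fwdDiff_iter_eq_sum_shift] at this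
  simpa [zsmul_eq_mul] using this

lemma iteratedDeriv_eq_zero_of_fwdDiff_iter_eq_zero {f : ℝ → ℝ} {n : ℕ} (hf : ContDiff ℝ n f)
    {t ε : ℝ} (hε : 0 < ε) (h : ∀ η ∈ Ioo 0 ε, (Δ_[η])^[n] f t = 0) :
    iteratedDeriv n f t = 0 := by
  set c : ℕ → ℝ := fun k => (-1 : ℤ) ^ (n - k) * n.choose k
  have hsum : ∀ η, (Δ_[η])^[n] f t = ∑ k ∈ Finset.range (n + 1), c k * f (t + k * η) := by
    intro η
    simp [fwdDiff_iter_eq_sum_shift, c, zsmul_eq_mul]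
  have hderiv : iteratedDeriv n (fun η => (Δ_[η])^[n] f t) =
      fun η => ∑ k ∈ Finset.range (n + 1), c k * (k ^ n * iteratedDeriv n f (t + k * η)) := by
    ext η
    simp_rw [hsum]
    rw [iteratedDeriv_fun_sum (fun k _ => by fun_prop)]
    refine Finset.sum_congr rfl fun k _ => ?_
    have hk := iteratedDeriv_comp_const_mul (f := fun x => f (t + x)) (by fun_prop) (k : ℝ)
    rw [iteratedDeriv_const_mul _ (by fun_prop), hk, iteratedDeriv_comp_const_add]
  have hzero : EqOn (iteratedDeriv n (fun η => (Δ_[η])^[n] f t)) 0 (Ioo 0 ε) := fun η hη => by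
    rw [(EqOn.iteratedDeriv_of_isOpen (g := 0) h isOpen_Ioo n) hη, iteratedDeriv_const_zero,
      Pi.zero_apply]
  have hcont : Continuous (iteratedDeriv n (fun η => (Δ_[η])^[n] f t)) := by
    rw [hderiv]
    have := hf.continuous_iteratedDeriv n le_rfl
    fun_prop
  have h0 := hzero.closure hcont continuous_const (by rw [closure_Ioo hε.ne]; exact ⟨le_rfl, hε.le⟩)
  simp only [hderiv, mul_zero, add_zero, Pi.zero_apply, ← mul_assoc, ← Finset.sum_mul, c,
    sum_choose_mul_pow_eq_factorial] at h0
  simpa [Nat.factorial_ne_zero] using h0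

def FwdDiffIterVanishesOn (n : ℕ) (f : ℝ → ℝ) (c d : ℝ) : Prop :=
  ∀ t η, 0 < η → c < t → t + n * η < d → (Δ_[η])^[n] f t = 0

lemma FwdDiffIterVanishesOn.congr {n : ℕ} {f g : ℝ → ℝ} {c d d' : ℝ}
    (hf : FwdDiffIterVanishesOn n f c d) (hfg : EqOn f g (Ioo c d')) (hd' : d' ≤ d) :
    FwdDiffIterVanishesOn n g c d' := by
  intro t η hη hct htd
  rw [← hf t η hη hct (by linarith)]
  refine (fwdDiff_iter_congr fun k hk => hfg ⟨?_, ?_⟩).symm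
  all_goals
    have : (k : ℝ) ≤ n := by exact_mod_cast hk
    simp only [nsmul_eq_mul]
    nlinarith

lemma fwdDiff_iter_three (f : ℝ → ℝ) (h x : ℝ) :
    (Δ_[h])^[3] f x = f (x + 3 * h) - 3 * f (x + 2 * h) + 3 * f (x + h) - f x := by
  simp only [Function.iterate_succ, Function.iterate_zero, Function.comp_apply, id, fwdDiff]
  ring_nf

lemma contDiff_succ_of_hasDerivAt {F f : ℝ → ℝ} {n : ℕ} (hF : ∀ x, HasDerivAt F (f x) x)
    (hf : ContDiff ℝ n f) : ContDiff ℝ (n + 1) F := by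
  rw [contDiff_succ_iff_deriv]
  refine ⟨fun x => (hF x).differentiableAt, by simp, ?_⟩
  rwa [show deriv F = f from funext fun x => (hF x).deriv]

lemma hasDerivAt_comp_const_add_mul {F f : ℝ → ℝ} (hF : ∀ x, HasDerivAt F (f x) x) (t a β : ℝ) :
    HasDerivAt (fun β => F (t + a * β)) (a * f (t + a * β)) β := by
  have hlin : HasDerivAt (fun β => t + a * β) a β := by
    simpa using ((hasDerivAt_id β).const_mul a).const_add t
  rw [mul_comm]
  exact (hF (t + a * β)).comp β hlin

lemma mul_eq_of_fwdDiff_iter_three_eq_zero {F f : ℝ → ℝ} (hF : ∀ x, HasDerivAt F (f x) x)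
    {t b : ℝ} (hb : 0 ≤ b) (h : ∀ β ∈ Ioo 0 b, (Δ_[β])^[3] f t = 0) :
    b * f t = 3 * F (t + b) - 3 / 2 * F (t + 2 * b) + 1 / 3 * F (t + 3 * b) - 11 / 6 * F t := by
  set H : ℝ → ℝ := fun β =>
    3 * F (t + 1 * β) - 3 / 2 * F (t + 2 * β) + 1 / 3 * F (t + 3 * β) - 11 / 6 * F t - β * f t
  have hH : ∀ β, HasDerivAt H ((Δ_[β])^[3] f t) β := fun β => by
    have hshift := hasDerivAt_comp_const_add_mul hF t
    refine (((((hshift 1 β).const_mul 3).sub ((hshift 2 β).const_mul (3 / 2))).add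
      ((hshift 3 β).const_mul (1 / 3))).sub_const (11 / 6 * F t)).sub
      ((hasDerivAt_id β).mul_const (f t)) |>.congr_deriv ?_
    rw [fwdDiff_iter_three]
    ring_nf
  -- `H b = H 0` is `∫₀ᵇ Δ_[β]^[3] f t dβ = 0`, evaluated through the primitive `F`.
  have hconst := constant_of_has_deriv_right_zero (f := H) (a := 0) (b := b)
    (fun β _ => (hH β).continuousAt.continuousWithinAt) (fun β hβ => by
      rcases hβ.1.eq_or_lt with rfl | hβ0
      · simpa [fwdDiff_zero_left] using (hH 0).hasDerivWithinAt
      · simpa [h β ⟨hβ0, hβ.2⟩] using (hH β).hasDerivWithinAt) b ⟨hb, le_rfl⟩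
  simp only [H, one_mul, mul_zero, add_zero, zero_mul, sub_zero] at hconst
  linarith

lemma FwdDiffIterVanishesOn.exists_contDiff_succ_eqOn {f : ℝ → ℝ} {n : ℕ} (hf : ContDiff ℝ n f)
    {c d : ℝ} (hΔ : FwdDiffIterVanishesOn 3 f c d) {b : ℝ} (hb : 0 < b) :
    ∃ g, ContDiff ℝ (n + 1) g ∧ EqOn f g (Ioo c (d - 3 * b)) := by
  set F : ℝ → ℝ := fun u => ∫ x in (0 : ℝ)..u, f x
  have hF : ∀ x, HasDerivAt F (f x) x := fun x =>
    (hf.continuous.integral_hasStrictDerivAt 0 x).hasDerivAt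
  refine ⟨fun t =>
    (3 * F (t + b) - 3 / 2 * F (t + 2 * b) + 1 / 3 * F (t + 3 * b) - 11 / 6 * F t) / b,
    ?_, fun t ht => ?_⟩
  · have := contDiff_succ_of_hasDerivAt hF hf
    fun_prop
  · rw [eq_div_iff hb.ne', mul_comm]
    exact mul_eq_of_fwdDiff_iter_three_eq_zero hF hb.le fun β hβ => hΔ t β hβ.1 ht.1 (by
      push_cast; linarith [ht.2, hβ.2])

lemma FwdDiffIterVanishesOn.exists_contDiff_eqOn {f : ℝ → ℝ} (hf : Continuous f) {c d : ℝ}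
    (hΔ : FwdDiffIterVanishesOn 3 f c d) {b : ℝ} (hb : 0 < b) (n : ℕ) :
    ∃ g, ContDiff ℝ n g ∧ EqOn f g (Ioo c (d - 3 * n * b)) := by
  induction n with
  | zero => exact ⟨f, contDiff_zero.2 hf, by simp [EqOn]⟩
  | succ n ih =>
    obtain ⟨g, hg, hfg⟩ := ih
    obtain ⟨g', hg', hgg'⟩ := (hΔ.congr hfg (by nlinarith)).exists_contDiff_succ_eqOn hg hb
    refine ⟨g', by exact_mod_cast hg', fun t ht => (hfg ⟨ht.1, ?_⟩).trans (hgg' ⟨ht.1, ?_⟩)⟩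
    all_goals push_cast at ht; linarith [ht.2]

lemma exists_quadratic_of_iteratedDeriv_three_eq_zero {f : ℝ → ℝ} (hf : ContDiff ℝ 3 f) {c d : ℝ}
    (h : ∀ t ∈ Ioo c d, iteratedDeriv 3 f t = 0) :
    ∃ a b e : ℝ, ∀ t ∈ Ioo c d, f t = a * t ^ 2 + b * t + e := by
  have hf₁ : Differentiable ℝ f := hf.differentiable (by norm_num)
  have hf₂ : Differentiable ℝ (deriv f) := (hf.iterate_deriv' 2 1).differentiable (by norm_num)
  have hf₃ : Differentiable ℝ (deriv (deriv f)) :=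
    (hf.iterate_deriv' 1 2).differentiable (by norm_num)
  rw [iteratedDeriv_eq_iterate] at h
  obtain ⟨A, hA⟩ := isOpen_Ioo.exists_eq_add_of_deriv_eq isPreconnected_Ioo hf₃.differentiableOn
    (differentiableOn_const 0) fun t ht => by simpa using h t ht
  obtain ⟨B, hB⟩ := isOpen_Ioo.exists_eq_add_of_deriv_eq (g := fun t => A * t) isPreconnected_Ioo
    hf₂.differentiableOn (by fun_prop) fun t ht => by simpa using hA ht
  obtain ⟨e, he⟩ := isOpen_Ioo.exists_eq_add_of_deriv_eq (g := fun t => A / 2 * t ^ 2 + B * t)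
    isPreconnected_Ioo hf₁.differentiableOn (by fun_prop) fun t ht => by
      rw [hB ht, (((hasDerivAt_pow 2 t).const_mul (A / 2)).fun_add
        ((hasDerivAt_id' t).const_mul B)).deriv]
      ring
  exact ⟨A / 2, B, e, he⟩

theorem FwdDiffIterVanishesOn.exists_quadratic {φ : ℝ → ℝ} (hφ : Continuous φ) {c d : ℝ}
    (hcd : c < d) (hΔ : FwdDiffIterVanishesOn 3 φ c d) :
    ∃ a b e : ℝ, ∀ t ∈ Ioo c ((c + d) / 2), φ t = a * t ^ 2 + b * t + e := by
  obtain ⟨g, hg, hφg⟩ := hΔ.exists_contDiff_eqOn hφ (b := (d - c) / 18) (by linarith) 3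
  rw [show d - 3 * ((3 : ℕ) : ℝ) * ((d - c) / 18) = (c + d) / 2 by push_cast; ring] at hφg
  have hg3 : ContDiff ℝ 3 g := by exact_mod_cast hg
  have hΔg := hΔ.congr hφg (by linarith)
  have h3g : ∀ t ∈ Ioo c ((c + d) / 2), iteratedDeriv 3 g t = 0 := fun t ht =>
    iteratedDeriv_eq_zero_of_fwdDiff_iter_eq_zero hg3 (ε := ((c + d) / 2 - t) / 3)
      (by linarith [ht.2]) fun η hη => hΔg t η hη.1 ht.1 (by push_cast; linarith [hη.2])
  obtain ⟨a, b, e, hq⟩ := exists_quadratic_of_iteratedDeriv_three_eq_zero hg3 h3g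
  exact ⟨a, b, e, fun t ht => (hφg ht).trans (hq t ht)⟩

theorem smoothing_step (φ : ℝ → ℝ) (hφ : Continuous φ)
    (k : Fin 4 → ℤ) (hk : Function.Injective k)
    (v : Fin 4 → ℝ) (hv : v 0 ≠ 0) (s : ℝ)
    (aI bI aJ bJ : ℝ) (hI : aI < bI) (hJ : aJ < bJ)
    (heq : ∀ x ∈ Set.Ioo aI bI, ∀ y ∈ Set.Ioo aJ bJ,
      (∑ j : Fin 4, v j * φ (x + (k j : ℝ) * y)) = s) :
    ∃ c d : ℝ, c < d ∧ ∃ a b e : ℝ,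
      ∀ t ∈ Set.Ioo c d, φ t = a * t ^ 2 + b * t + e := by
  have hq₀ : ((aI + bI) / 2, (aJ + bJ) / 2) ∈ Ioo aI bI ×ˢ Ioo aJ bJ :=
    ⟨⟨by linarith, by linarith⟩, ⟨by linarith, by linarith⟩⟩
  have hΔ := eventually_fwdDiff_three_eq_zero_of_sum_eq φ (K := fun j => (k j : ℝ))
    (Int.cast_injective.comp hk) v s (isOpen_Ioo.prod isOpen_Ioo)
    (fun q hq => heq q.1 hq.1 q.2 hq.2) hq₀
  set t₀ := (aI + bI) / 2 + (k 0 : ℝ) * ((aJ + bJ) / 2)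
  obtain ⟨δ, hδ, hball⟩ := Metric.eventually_nhds_iff.1 hΔ
  have hV : FwdDiffIterVanishesOn 3 φ (t₀ - δ) (t₀ + δ) := fun t η hη hct htd => by
    refine (mul_eq_zero.1 (@hball (t, η) ?_)).resolve_left hv
    rw [Prod.dist_eq, max_lt_iff, Real.dist_eq, Real.dist_eq, abs_lt, abs_lt]
    push_cast at htd
    refine ⟨⟨?_, ?_⟩, ?_, ?_⟩ <;> linarith
  exact ⟨_, _, by linarith, hV.exists_quadratic hφ (by linarith)⟩
end

section
/- Let k1, k2, k3, k4 be pairwise distinct positive integers. Then none of the seven vectors v ∈ V satisfies the three equations v1+v2+v3+v4 = 0, k1·v1+k2·v2+k3·v3+k4·v4 = 0, and k1²·v1+k2²·v2+k3²·v3+k4²·v4 = 0 simultaneously; that is, no vector of V lies in the kernel of the 3×4 matrix whose rows are (1,1,1,1), (k1,k2,k3,k4), (k1²,k2²,k3²,k4²). -/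
section PowerSums

variable {R : Type*} [CommRing R] [IsDomain R]

theorem eq_or_eq_of_add_eq_add_of_sq_add_sq_eq [NeZero (2 : R)] {a b c d : R}
    (h₁ : a + b = c + d) (h₂ : a ^ 2 + b ^ 2 = c ^ 2 + d ^ 2) : a = c ∨ a = d := by
  have h : 2 * ((a - c) * (a - d)) = 0 := by
    linear_combination (a - b - c - d) * h₁ + h₂
  rcases mul_eq_zero.mp ((mul_eq_zero.mp h).resolve_left two_ne_zero) with h | h
  exacts [.inl (sub_eq_zero.mp h), .inr (sub_eq_zero.mp h)]

theorem eq_of_add_eq_two_mul_of_sq_add_sq_eq_two_mul_sq {a b c : R}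
    (h₁ : a + b = 2 * c) (h₂ : a ^ 2 + b ^ 2 = 2 * c ^ 2) : a = b := by
  have h : (a - b) ^ 2 = 0 := by
    linear_combination (-a - b - 2 * c) * h₁ + 2 * h₂
  exact sub_eq_zero.mp (pow_eq_zero_iff two_ne_zero |>.mp h)

end PowerSums

theorem kernel_avoidance_general (k : Fin 4 → ℤ) (hk : Function.Injective k) :
    ∀ v ∈ Vfam,
      ¬ ((∑ j : Fin 4, v j) = 0 ∧
         (∑ j : Fin 4, (k j : ℝ) * v j) = 0 ∧
         (∑ j : Fin 4, (k j : ℝ) ^ 2 * v j) = 0) := by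
  have hx : Function.Injective (fun j => (k j : ℝ)) := Int.cast_injective.comp hk
  rintro v hv ⟨h₀, h₁, h₂⟩
  simp only [Vfam, Set.mem_insert_iff, Set.mem_singleton_iff] at hv
  rcases hv with rfl | rfl | rfl | hv <;>
    simp only [Fin.sum_univ_four, Matrix.cons_val_zero, Matrix.cons_val_one, Matrix.cons_val,
      mul_one, mul_neg, mul_zero, add_zero] at h₀ h₁ h₂
  · rcases eq_or_eq_of_add_eq_add_of_sq_add_sq_eq (a := (k 0 : ℝ)) (b := k 1) (c := k 2) (d := k 3)
      (by linarith) (by linarith) with h | h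
    exacts [hx.ne (by decide) h, hx.ne (by decide) h]
  · exact hx.ne (by decide : (0 : Fin 4) ≠ 1)
      (eq_of_add_eq_two_mul_of_sq_add_sq_eq_two_mul_sq (c := (k 2 : ℝ)) (by linarith) (by linarith))
  · exact hx.ne (by decide : (0 : Fin 4) ≠ 1) (by linarith)
  · rcases hv with rfl | rfl | rfl | rfl <;> simp at h₀

theorem kernel_avoidance (k : Fin 4 → ℤ) (hk : Function.Injective k)
    (hpos : ∀ j, 0 < k j) :
    ∀ v ∈ Vfam,
      ¬ ((∑ j : Fin 4, v j) = 0 ∧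
         (∑ j : Fin 4, (k j : ℝ) * v j) = 0 ∧
         (∑ j : Fin 4, (k j : ℝ) ^ 2 * v j) = 0) :=
  kernel_avoidance_general k hk
end

section
/- Let φ : ℝ → ℝ be piecewise linear in the following sense: there are finitely many points a0 < a1 < ... < am such that φ is affine on each of the intervals (−∞, a0], [a0, a1], ..., [a_{m−1}, a_m], [a_m, +∞). Suppose φ maps a set A ⊆ ℝ bijectively onto a set B ⊆ ℝ, and A contains arithmetic progressions of every length. Then B also contains arithmetic progressions of every length. -/
open Set

private def piece (m : ℕ) (a : Fin (m + 1) → ℝ) (i : ℕ) : Set ℝ :=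
  if i = 0 then Set.Iic (a 0)
  else if h : i ≤ m then Set.Icc (a ⟨i - 1, by omega⟩) (a ⟨i, by omega⟩)
  else Set.Ici (a (Fin.last m))

private lemma piece_ordConnected (m : ℕ) (a : Fin (m + 1) → ℝ) (i : ℕ) :
    (piece m a i).OrdConnected := by
  unfold piece
  split_ifs
  · exact ordConnected_Iic
  · exact ordConnected_Icc
  · exact ordConnected_Ici

private lemma piece_cover (m : ℕ) (a : Fin (m + 1) → ℝ) (u : ℝ) :
    ∃ i < m + 2, u ∈ piece m a i := by
  by_cases h0 : u ≤ a 0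
  · exact ⟨0, by omega, by simp [piece, h0]⟩
  by_cases hL : a (Fin.last m) ≤ u
  · refine ⟨m + 1, by omega, ?_⟩
    simp only [piece]
    rw [if_neg (by omega), dif_neg (by omega)]
    exact hL
  push_neg at h0 hL
  have hm : 1 ≤ m := by
    by_contra h
    have hm0 : m = 0 := by omega
    subst hm0
    have : a (Fin.last 0) = a 0 := rfl
    linarith [this ▸ hL]
  set b : ℕ → ℝ := fun i => a ⟨min i m, by omega⟩ with hb
  have hPm : u ≤ b m := by
    have : b m = a (Fin.last m) := by
      simp only [hb]
      congr 1
      exact Fin.ext (by simp [Fin.last])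
    rw [this]; exact le_of_lt hL
  have hEx : ∃ i, u ≤ b i := ⟨m, hPm⟩
  set j := Nat.find hEx with hjdef
  have hj : u ≤ b j := Nat.find_spec hEx
  have hjm : j ≤ m := Nat.find_min' hEx hPm
  have hj0 : j ≠ 0 := by
    intro h
    have : b 0 = a 0 := by
      simp only [hb]; congr 1
    rw [h, this] at hj
    linarith
  have hlt : ¬ u ≤ b (j - 1) := Nat.find_min hEx (by omega)
  push_neg at hlt
  refine ⟨j, by omega, ?_⟩
  simp only [piece]
  rw [if_neg hj0, dif_pos hjm]
  constructor
  · have e : b (j - 1) = a ⟨j - 1, by omega⟩ := by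
      simp only [hb]; congr 1; exact Fin.ext (by simp; omega)
    rw [e] at hlt
    exact le_of_lt hlt
  · have e : b j = a ⟨j, by omega⟩ := by
      simp only [hb]; congr 1; exact Fin.ext (by simp; omega)
    rw [e] at hj
    exact hj

theorem piecewise_linear_preserves_APs (φ : ℝ → ℝ)
    (m : ℕ) (a : Fin (m + 1) → ℝ) (ha : StrictMono a)
    (hleft : ∃ p q : ℝ, ∀ u : ℝ, u ≤ a 0 → φ u = p * u + q)
    (hmid : ∀ i : Fin m, ∃ p q : ℝ,
      ∀ u ∈ Set.Icc (a i.castSucc) (a i.succ), φ u = p * u + q)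
    (hright : ∃ p q : ℝ, ∀ u : ℝ, a (Fin.last m) ≤ u → φ u = p * u + q)
    (A B : Set ℝ) (hbij : Set.BijOn φ A B)
    (hA : ∀ N : ℕ, 1 ≤ N → ∃ x y : ℝ, y ≠ 0 ∧
      ∀ k ∈ Finset.Icc 1 N, x + (k : ℝ) * y ∈ A) :
    ∀ N : ℕ, 1 ≤ N → ∃ x y : ℝ, y ≠ 0 ∧
      ∀ k ∈ Finset.Icc 1 N, x + (k : ℝ) * y ∈ B := by
  -- each piece is affine
  have haff : ∀ i : ℕ, ∃ p q : ℝ, ∀ u ∈ piece m a i, φ u = p * u + q := by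
    intro i
    simp only [piece]
    split_ifs with h1 h2
    · obtain ⟨p, q, h⟩ := hleft
      exact ⟨p, q, fun u hu => h u hu⟩
    · obtain ⟨p, q, h⟩ := hmid ⟨i - 1, by omega⟩
      refine ⟨p, q, fun u hu => h u ?_⟩
      have e1 : ((⟨i - 1, by omega⟩ : Fin m).castSucc : Fin (m+1)) = ⟨i - 1, by omega⟩ :=
        Fin.ext rfl
      have e2 : ((⟨i - 1, by omega⟩ : Fin m).succ : Fin (m+1)) = ⟨i, by omega⟩ :=
        Fin.ext (by simp [Fin.succ]; omega)
      rw [e1, e2]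
      exact hu
    · obtain ⟨p, q, h⟩ := hright
      exact ⟨p, q, fun u hu => h u hu⟩
  choose P Q hPQ using haff
  intro N hN
  obtain ⟨x, y, hy, hmem⟩ := hA ((N + 1) * (m + 2)) (Nat.one_le_iff_ne_zero.mpr (Nat.mul_ne_zero (by omega) (by omega)))
  set M := (N + 1) * (m + 2) with hM
  choose c hclt hcmem using fun k : ℕ => piece_cover m a (x + (k : ℝ) * y)
  have maps : ∀ k ∈ Finset.Icc 1 M, c k ∈ Finset.range (m + 2) := by
    intro k _
    exact Finset.mem_range.mpr (hclt k)
  have hcards : (Finset.range (m + 2)).card * N < (Finset.Icc 1 M).card := by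
    rw [Finset.card_range, Nat.card_Icc]
    have h1 : M + 1 - 1 = M := by omega
    rw [h1, hM]
    nlinarith
  obtain ⟨i, _, hfib⟩ := Finset.exists_lt_card_fiber_of_mul_lt_card_of_maps_to maps hcards
  set F := (Finset.Icc 1 M).filter (fun k => c k = i) with hF
  have hFne : F.Nonempty := Finset.card_pos.mp (by omega)
  set j := F.min' hFne with hj
  set J := F.max' hFne with hJ
  have hjF : j ∈ F := F.min'_mem hFne
  have hJF : J ∈ F := F.max'_mem hFne
  have hjIcc : j ∈ Finset.Icc 1 M := Finset.mem_filter.mp hjF |>.1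
  have hJIcc : J ∈ Finset.Icc 1 M := Finset.mem_filter.mp hJF |>.1
  have hj1 : 1 ≤ j := (Finset.mem_Icc.mp hjIcc).1
  have hJM : J ≤ M := (Finset.mem_Icc.mp hJIcc).2
  have hcj : c j = i := (Finset.mem_filter.mp hjF).2
  have hcJ : c J = i := (Finset.mem_filter.mp hJF).2
  have hsub : F ⊆ Finset.Icc j J := fun k hk =>
    Finset.mem_Icc.mpr ⟨F.min'_le k hk, F.le_max' k hk⟩
  have hspan : j + N ≤ J := by
    have := Finset.card_le_card hsub
    rw [Nat.card_Icc] at this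
    omega
  -- endpoints in A and in piece i
  have hujA : x + (j : ℝ) * y ∈ A := hmem j (by simp [Finset.mem_Icc]; omega)
  have huJA : x + (J : ℝ) * y ∈ A := hmem J (by simp [Finset.mem_Icc]; omega)
  have hujP : x + (j : ℝ) * y ∈ piece m a i := hcj ▸ hcmem j
  have huJP : x + (J : ℝ) * y ∈ piece m a i := hcJ ▸ hcmem J
  have hp0 : P i ≠ 0 := by
    intro h
    have e1 := hPQ i _ hujP
    have e2 := hPQ i _ huJP
    rw [h] at e1 e2
    have : x + (j : ℝ) * y = x + (J : ℝ) * y :=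
      hbij.injOn hujA huJA (by rw [e1, e2]; ring)
    have h2 : (j : ℝ) * y = (J : ℝ) * y := by linarith
    have h3 : (j : ℝ) = (J : ℝ) := mul_right_cancel₀ hy h2
    have : j = J := Nat.cast_injective h3
    omega
  refine ⟨P i * (x + (j : ℝ) * y) + Q i, P i * y, mul_ne_zero hp0 hy, ?_⟩
  intro k hk
  obtain ⟨hk1, hkN⟩ := Finset.mem_Icc.mp hk
  set r := j + k with hr
  have hrle : (j : ℝ) ≤ (r : ℝ) := by
    exact_mod_cast Nat.le_add_right j k
  have hrge : (r : ℝ) ≤ (J : ℝ) := by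
    exact_mod_cast (by omega : r ≤ J)
  have hurA : x + (r : ℝ) * y ∈ A := hmem r (by simp [Finset.mem_Icc]; omega)
  have hurP : x + (r : ℝ) * y ∈ piece m a i := by
    apply (piece_ordConnected m a i).uIcc_subset hujP huJP
    rw [Set.mem_uIcc]
    rcases le_total 0 y with hy' | hy'
    · left; constructor <;> nlinarith
    · right; constructor <;> nlinarith
  have key : P i * (x + (j : ℝ) * y) + Q i + (k : ℝ) * (P i * y)
      = φ (x + (r : ℝ) * y) := by
    rw [hPQ i _ hurP]
    simp only [hr]
    push_cast
    ring
  rw [key]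
  exact hbij.mapsTo hurA
end
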